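/- For γ < 0, λ > 0, θ > 0, define Λ(y) = (θ^γ − y/λ)^{1/γ} − θ for y < λθ^γ and Λ(y) = +∞ for y ≥ λθ^γ. Then for all x ≥ 0, sup_{y∈ℝ}(xy − Λ(y)) = θ + λθ^γ x − λ^{1/(1−γ)} c_γ x^{1/(1−γ)}, where c_γ = (−γ)^{γ/(1−γ)} + (−γ)^{1/(1−γ)}. -/

import Mathlib

open Real

/-- Weighted AM-GM gives the key Young-type inequality. -/
lemma key_ineq (γ : ℝ) (hγ : γ < 0) (a : ℝ) (ha : 0 ≤ a) (t : ℝ) (ht : 0 < t) :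
    (1 - γ) * (-γ) ^ (γ / (1 - γ)) * a ^ (1 / (1 - γ)) ≤ a * t + t ^ (1 / γ) := by
  have h1 : (0:ℝ) < 1 - γ := by linarith
  have hng : (0:ℝ) < -γ := by linarith
  rcases eq_or_lt_of_le ha with rfl | hapos
  · rw [Real.zero_rpow (by positivity)]
    have := Real.rpow_nonneg ht.le (1 / γ)
    nlinarith
  · set w1 : ℝ := 1 / (1 - γ) with hw1
    set w2 : ℝ := -γ / (1 - γ) with hw2
    have hw : w1 + w2 = 1 := by rw [hw1, hw2]; field_simp [h1.ne']; ring
    have hw1pos : 0 < w1 := by positivity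
    have hw2pos : 0 < w2 := by positivity
    set p1 : ℝ := (1 - γ) * (a * t) with hp1
    set p2 : ℝ := ((1 - γ) / (-γ)) * t ^ (1 / γ) with hp2
    have hp1pos : 0 < p1 := by positivity
    have hp2pos : 0 < p2 := by
      have := Real.rpow_pos_of_pos ht (1 / γ)
      positivity
    have hgm := Real.geom_mean_le_arith_mean2_weighted hw1pos.le hw2pos.le
      hp1pos.le hp2pos.le hw
    have c1 : w1 * (1 - γ) = 1 := by rw [hw1]; field_simp
    have c2 : w2 * ((1 - γ) / -γ) = 1 := by
      rw [hw2]; field_simp [hγ.ne, h1.ne']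
    have harith : w1 * p1 + w2 * p2 = a * t + t ^ (1 / γ) := by
      rw [hp1, hp2]; linear_combination (a * t) * c1 + t ^ (1 / γ) * c2
    have hgeom : p1 ^ w1 * p2 ^ w2 = (1 - γ) * (-γ) ^ (γ / (1 - γ)) * a ^ w1 := by
      have e0 : γ / (1 - γ) = -w2 := by rw [hw2]; ring
      have e1 : p1 ^ w1 = (1 - γ) ^ w1 * (a ^ w1 * t ^ w1) := by
        rw [hp1, Real.mul_rpow h1.le (by positivity), Real.mul_rpow ha ht.le]
      have e2 : p2 ^ w2 = ((1 - γ) ^ w2 / (-γ) ^ w2) * (t ^ w1)⁻¹ := by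
        rw [hp2, Real.mul_rpow (by positivity) (Real.rpow_nonneg ht.le _),
          Real.div_rpow h1.le hng.le, ← Real.rpow_mul ht.le]
        congr 1
        rw [show (1 / γ) * w2 = -w1 by rw [hw1, hw2]; field_simp [hγ.ne, h1.ne'],
          Real.rpow_neg ht.le]
      have e3 : (1 - γ) ^ w1 * (1 - γ) ^ w2 = 1 - γ := by
        rw [← Real.rpow_add h1, hw, Real.rpow_one]
      have htw : (0:ℝ) < t ^ w1 := Real.rpow_pos_of_pos ht _
      have hgw : (0:ℝ) < (-γ) ^ w2 := Real.rpow_pos_of_pos hng _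
      rw [e1, e2, e0, Real.rpow_neg hng.le]
      calc (1 - γ) ^ w1 * (a ^ w1 * t ^ w1) * ((1 - γ) ^ w2 / (-γ) ^ w2 * (t ^ w1)⁻¹)
          = ((1 - γ) ^ w1 * (1 - γ) ^ w2) * a ^ w1 * ((-γ) ^ w2)⁻¹
              * (t ^ w1 * (t ^ w1)⁻¹) := by ring
        _ = (1 - γ) * ((-γ) ^ w2)⁻¹ * a ^ w1 := by
            rw [e3, mul_inv_cancel₀ htw.ne']; ring
    calc (1 - γ) * (-γ) ^ (γ / (1 - γ)) * a ^ w1 = p1 ^ w1 * p2 ^ w2 := hgeom.symm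
      _ ≤ w1 * p1 + w2 * p2 := hgm
      _ = a * t + t ^ (1 / γ) := harith

/-- Value at the optimal point. -/
lemma eq_opt (γ : ℝ) (hγ : γ < 0) (a : ℝ) (ha : 0 < a) :
    a * (a * -γ) ^ (γ / (1 - γ)) + ((a * -γ) ^ (γ / (1 - γ))) ^ (1 / γ)
      = (1 - γ) * (-γ) ^ (γ / (1 - γ)) * a ^ (1 / (1 - γ)) := by
  have h1 : (0:ℝ) < 1 - γ := by linarith
  have hng : (0:ℝ) < -γ := by linarith
  have hag : (0:ℝ) < a * -γ := by positivity
  set q : ℝ := γ / (1 - γ) with hq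
  set w : ℝ := 1 / (1 - γ) with hw
  have hqw : q + 1 = w := by rw [hq, hw]; field_simp [h1.ne']; ring
  have e1 : (a * -γ) ^ q = a ^ q * (-γ) ^ q := Real.mul_rpow ha.le hng.le
  have e2 : ((a * -γ) ^ q) ^ (1 / γ) = (a * -γ) ^ w := by
    rw [← Real.rpow_mul hag.le]
    congr 1
    rw [hq, hw]; field_simp [hγ.ne, h1.ne']
  have e3 : (a * -γ) ^ w = a ^ w * (-γ) ^ w := Real.mul_rpow ha.le hng.le
  have e4 : (-γ) ^ w = (-γ) ^ q * -γ := by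
    rw [← hqw, Real.rpow_add hng, Real.rpow_one]
  have e5 : a ^ w = a ^ q * a := by
    rw [← hqw, Real.rpow_add ha, Real.rpow_one]
  rw [e2, e1, e3, e4, e5]; ring

/-- Rewriting the constant in the statement. -/
lemma const_id (γ l x : ℝ) (hγ : γ < 0) (hl : 0 < l) (hx : 0 ≤ x) :
    l ^ (1 / (1 - γ)) * ((-γ) ^ (γ / (1 - γ)) + (-γ) ^ (1 / (1 - γ)))
        * x ^ (1 / (1 - γ))
      = (1 - γ) * (-γ) ^ (γ / (1 - γ)) * (l * x) ^ (1 / (1 - γ)) := by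
  have h1 : (0:ℝ) < 1 - γ := by linarith
  have hng : (0:ℝ) < -γ := by linarith
  rw [Real.mul_rpow hl.le hx]
  have e4 : (-γ) ^ (1 / (1 - γ)) = (-γ) ^ (γ / (1 - γ)) * -γ := by
    rw [show (1:ℝ) / (1 - γ) = γ / (1 - γ) + 1 by field_simp; ring,
      Real.rpow_add hng, Real.rpow_one]
  rw [e4]; ring

/-- For γ < 0, λ > 0, θ > 0, with Λ(y) = (θ^γ − y/λ)^{1/γ} − θ for y < λθ^γ
(+∞ otherwise), and c_γ = (−γ)^{γ/(1−γ)} + (−γ)^{1/(1−γ)}, one has, for x ≥ 0,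
sup_y (xy − Λ(y)) = θ + λθ^γ x − λ^{1/(1−γ)} c_γ x^{1/(1−γ)}. -/
theorem stmt_15 (γ l θ : ℝ) (hγ : γ < 0) (hl : 0 < l) (hθ : 0 < θ) :
    ∀ x : ℝ, 0 ≤ x →
      (⨆ y : ℝ, ((x * y : ℝ) : EReal) -
          (if y < l * θ ^ γ then (((θ ^ γ - y / l) ^ (1 / γ) - θ : ℝ) : EReal) else ⊤))
        = ((θ + l * θ ^ γ * x
            - l ^ (1 / (1 - γ)) * ((-γ) ^ (γ / (1 - γ)) + (-γ) ^ (1 / (1 - γ)))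
              * x ^ (1 / (1 - γ)) : ℝ) : EReal) := by
  intro x hx
  have h1 : (0:ℝ) < 1 - γ := by linarith
  have hng : (0:ℝ) < -γ := by linarith
  have hconst := const_id γ l x hγ hl hx
  apply le_antisymm
  · apply iSup_le
    intro y
    by_cases hy : y < l * θ ^ γ
    · rw [if_pos hy, ← EReal.coe_sub, EReal.coe_le_coe_iff, hconst]
      set t : ℝ := θ ^ γ - y / l with htdef
      clear_value t
      have htpos : 0 < t := by
        have : y / l < θ ^ γ := (div_lt_iff₀ hl).mpr (by linarith)
        simp only [htdef]; linarith
      have hxy : x * y = l * θ ^ γ * x - l * x * t := by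
        have hy' : y = l * θ ^ γ - l * t := by
          rw [htdef]; field_simp; ring
        rw [hy']; ring
      have hk := key_ineq γ hγ (l * x) (by positivity) t htpos
      linarith
    · rw [if_neg hy, EReal.sub_top]
      exact bot_le
  · rcases eq_or_lt_of_le hx with hx0 | hxpos
    · -- x = 0 : the supremum is approached but not attained
      subst hx0
      have hR : θ + l * θ ^ γ * 0
          - l ^ (1 / (1 - γ)) * ((-γ) ^ (γ / (1 - γ)) + (-γ) ^ (1 / (1 - γ)))
            * (0:ℝ) ^ (1 / (1 - γ)) = θ := by
        rw [Real.zero_rpow (by positivity)]; ring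
      rw [hR, le_iSup_iff]
      intro b hb
      by_contra hcon
      push_neg at hcon
      obtain ⟨r, hbr, hrθ⟩ := EReal.exists_between_coe_real hcon
      rw [EReal.coe_lt_coe_iff] at hrθ
      set ε : ℝ := θ - r with hε
      have hεpos : 0 < ε := by simp only [hε]; linarith
      set y0 : ℝ := l * (θ ^ γ - ε ^ γ) with hy0
      have hεγ : (0:ℝ) < ε ^ γ := Real.rpow_pos_of_pos hεpos γ
      have hylt : y0 < l * θ ^ γ := by
        rw [hy0]; nlinarith
      have hval := hb y0
      rw [if_pos hylt, ← EReal.coe_sub] at hval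
      have hsub : θ ^ γ - y0 / l = ε ^ γ := by
        rw [hy0]; field_simp; ring
      rw [hsub] at hval
      have hpow : (ε ^ γ) ^ (1 / γ) = ε := by
        rw [← Real.rpow_mul hεpos.le, mul_one_div, div_self hγ.ne, Real.rpow_one]
      rw [hpow] at hval
      have : (0:ℝ) * y0 - (ε - θ) = r := by rw [hε]; ring
      rw [this] at hval
      exact absurd (lt_of_lt_of_le hbr hval) (lt_irrefl _)
    · -- x > 0 : the supremum is attained
      set a : ℝ := l * x with ha
      have hapos : 0 < a := by positivity
      set t : ℝ := (a * -γ) ^ (γ / (1 - γ)) with htdef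
      have htpos : 0 < t := Real.rpow_pos_of_pos (by positivity) _
      set y0 : ℝ := l * (θ ^ γ - t) with hy0
      clear_value y0
      have hylt : y0 < l * θ ^ γ := by rw [hy0]; nlinarith
      refine le_trans (le_of_eq ?_) (le_iSup _ y0)
      rw [if_pos hylt, ← EReal.coe_sub, EReal.coe_eq_coe_iff, hconst]
      have hsub : θ ^ γ - y0 / l = t := by rw [hy0]; field_simp; ring
      rw [hsub]
      have hxy : x * y0 = l * θ ^ γ * x - a * t := by
        rw [hy0, ha]; ring
      rw [hxy]
      have heq := eq_opt γ hγ a hapos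
      rw [← htdef] at heq
      linarith [heq, (const_id γ l x hγ hl hx)]
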